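/- Let A_k with a_1 = 1 be a symmetric basis (a_i + a_{k-i} = a_k for 1 ≤ i ≤ k-1), and suppose every integer in [0, a_k] and in [(h_0−1)a_k, h_0·a_k] is a sum of at most h_0 elements of A_k. Then for every integer m with 1 ≤ m ≤ h_0 − 2, every integer in [m·a_k, (m+1)·a_k] is a sum of at most 2h_0 − 2 elements of A_k. -/

import Mathlib

/-- `n` is a sum of at most `h` elements of the basis `a 1, …, a k`
(repetition allowed), expressed with coefficients. -/
def RepIdx (a : ℕ → ℕ) (k h n : ℕ) : Prop :=
  ∃ c : ℕ → ℕ, (∑ i ∈ Finset.Icc 1 k, c i) ≤ h ∧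
    (∑ i ∈ Finset.Icc 1 k, c i * a i) = n

namespace RepIdx

variable {a : ℕ → ℕ} {k : ℕ}

theorem mono {h h' n : ℕ} (hn : RepIdx a k h n) (hh : h ≤ h') : RepIdx a k h' n :=
  let ⟨c, hc, hsum⟩ := hn
  ⟨c, hc.trans hh, hsum⟩

theorem add {h₁ h₂ n₁ n₂ : ℕ} (hn₁ : RepIdx a k h₁ n₁) (hn₂ : RepIdx a k h₂ n₂) :
    RepIdx a k (h₁ + h₂) (n₁ + n₂) := by
  obtain ⟨c₁, hc₁, rfl⟩ := hn₁
  obtain ⟨c₂, hc₂, rfl⟩ := hn₂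
  refine ⟨c₁ + c₂, ?_, ?_⟩
  · simpa only [Pi.add_apply, Finset.sum_add_distrib] using Nat.add_le_add hc₁ hc₂
  · simp only [Pi.add_apply, add_mul, Finset.sum_add_distrib]

theorem nsmul_basis {j : ℕ} (hj₁ : 1 ≤ j) (hjk : j ≤ k) (m : ℕ) :
    RepIdx a k m (m * a j) := by
  have hj : j ∈ Finset.Icc 1 k := Finset.mem_Icc.mpr ⟨hj₁, hjk⟩
  refine ⟨fun i => if j = i then m else 0, ?_, ?_⟩
  · rw [Finset.sum_ite_eq, if_pos hj]
  · simp only [ite_mul, zero_mul, Finset.sum_ite_eq, if_pos hj]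

end RepIdx

theorem stmt6_general (a : ℕ → ℕ) (k h₀ : ℕ) (hk : 2 ≤ k)
    (hcov1 : ∀ x, x ≤ a k → RepIdx a k h₀ x) :
    ∀ m, 1 ≤ m → m ≤ h₀ - 2 →
      ∀ x, m * a k ≤ x → x ≤ (m + 1) * a k →
        RepIdx a k (2 * h₀ - 2) x := by
  intro m _ hm x hx₁ hx₂
  have hrest : x - m * a k ≤ a k := by rw [add_one_mul] at hx₂; omega
  have hx : RepIdx a k (h₀ + m) (x - m * a k + m * a k) :=
    (hcov1 _ hrest).add (RepIdx.nsmul_basis (by omega) le_rfl m)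
  rw [Nat.sub_add_cancel hx₁] at hx
  exact hx.mono (by omega)

theorem stmt6 (a : ℕ → ℕ) (k h₀ : ℕ) (hk : 2 ≤ k)
    (ha1 : a 1 = 1)
    (hmono : ∀ i j, 1 ≤ i → i < j → j ≤ k → a i < a j)
    (hsymm : ∀ i, 1 ≤ i → i ≤ k - 1 → a i + a (k - i) = a k)
    (hcov1 : ∀ x, x ≤ a k → RepIdx a k h₀ x)
    (hcov2 : ∀ x, (h₀ - 1) * a k ≤ x → x ≤ h₀ * a k → RepIdx a k h₀ x) :
    ∀ m, 1 ≤ m → m ≤ h₀ - 2 →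
      ∀ x, m * a k ≤ x → x ≤ (m + 1) * a k →
        RepIdx a k (2 * h₀ - 2) x :=
  stmt6_general a k h₀ hk hcov1
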